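/- arXiv:1704.02099 — 8 statements merged into one kernel-verified Lean document; each statement's English description precedes it below -/
import Mathlib

section
/- Every finite hyperforest with at least one hyperedge contains a leaf, i.e., a hyperedge e such that at most one vertex of e is contained in any other hyperedge. -/
/-!
If no hyperedge were a leaf, a path `e 0, v 0, e 1, v 1, …, e n` of distinct hyperedges
joined by distinct vertices could always be prolonged: the last hyperedge has a vertex
`w ≠ v (n - 1)` lying in a second hyperedge `f`. If `w` is an earlier vertex of the path, or
`f` an earlier hyperedge, the path closes up into a cycle; otherwise `w, f` extends it.
Paths with more hyperedges than the hypergraph has are impossible.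
-/

/-- A cycle of length `m ≥ 2`: distinct vertices `v i`, distinct hyperedges `e i`,
with `v i ∈ e i ∩ e (i+1 mod m)`. -/
def CycleOfLen {V : Type} (E : Set (Set V)) (m : ℕ) : Prop :=
  ∃ _hm : 2 ≤ m, ∃ v : Fin m → V, ∃ e : Fin m → Set V,
    Function.Injective v ∧ Function.Injective e ∧ (∀ i, e i ∈ E) ∧
      ∀ i : Fin m, v i ∈ e i ∧ v i ∈ e ⟨((i : ℕ) + 1) % m, Nat.mod_lt _ (by omega)⟩

variable {V : Type}

def IsLeaf (E : Set (Set V)) (e : Set V) : Prop :=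
  ∃ u : V, ∀ v ∈ e, (∃ e' ∈ E, e' ≠ e ∧ v ∈ e') → v = u

/-- The path `e 0, v 0, e 1, …, v (n - 1), e n`; only these values of `e` and `v` matter. -/
structure IsHyperpath (E : Set (Set V)) (e : ℕ → Set V) (v : ℕ → V) (n : ℕ) : Prop where
  mem : ∀ i ≤ n, e i ∈ E
  injOn_edge : Set.InjOn e (Set.Iic n)
  injOn_vertex : Set.InjOn v (Set.Iio n)
  vertex_mem : ∀ i < n, v i ∈ e i ∧ v i ∈ e (i + 1)

variable {E : Set (Set V)}

namespace IsHyperpath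

variable {e : ℕ → Set V} {v : ℕ → V} {n : ℕ}

theorem drop (hp : IsHyperpath E e v n) {s : ℕ} (hs : s ≤ n) :
    IsHyperpath E (fun i => e (s + i)) (fun i => v (s + i)) (n - s) where
  mem i hi := hp.mem _ (by omega)
  injOn_edge i hi j hj hij := by
    have := hp.injOn_edge (show s + i ≤ n by rw [Set.mem_Iic] at hi; omega)
      (show s + j ≤ n by rw [Set.mem_Iic] at hj; omega) hij
    omega
  injOn_vertex i hi j hj hij := by
    have := hp.injOn_vertex (show s + i < n by rw [Set.mem_Iio] at hi; omega)
      (show s + j < n by rw [Set.mem_Iio] at hj; omega) hij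
    omega
  vertex_mem i hi := hp.vertex_mem _ (by omega)

theorem snoc (hp : IsHyperpath E e v n) {f : Set V} {w : V} (hf : f ∈ E)
    (hfe : ∀ i ≤ n, e i ≠ f) (hwn : w ∈ e n) (hwf : w ∈ f) (hwv : ∀ i < n, v i ≠ w) :
    IsHyperpath E (Function.update e (n + 1) f) (Function.update v n w) (n + 1) where
  mem i hi := by
    rcases Nat.lt_or_eq_of_le hi with hi | rfl
    · rw [Function.update_of_ne (by omega)]; exact hp.mem i (by omega)
    · rwa [Function.update_self]
  injOn_edge i hi j hj hij := by
    simp only [Set.mem_Iic] at hi hj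
    rcases Nat.lt_or_eq_of_le hi with hi | rfl <;> rcases Nat.lt_or_eq_of_le hj with hj | rfl
    · rw [Function.update_of_ne (by omega), Function.update_of_ne (by omega)] at hij
      exact hp.injOn_edge (show i ≤ n by omega) (show j ≤ n by omega) hij
    · rw [Function.update_of_ne (by omega), Function.update_self] at hij
      exact (hfe i (by omega) hij).elim
    · rw [Function.update_self, Function.update_of_ne (by omega)] at hij
      exact (hfe j (by omega) hij.symm).elim
    · rfl
  injOn_vertex i hi j hj hij := by
    simp only [Set.mem_Iio] at hi hj
    rcases Nat.lt_succ_iff_lt_or_eq.1 hi with hi | rfl <;>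
      rcases Nat.lt_succ_iff_lt_or_eq.1 hj with hj | rfl
    · rw [Function.update_of_ne (by omega), Function.update_of_ne (by omega)] at hij
      exact hp.injOn_vertex hi hj hij
    · rw [Function.update_of_ne (by omega), Function.update_self] at hij
      exact (hwv i hi hij).elim
    · rw [Function.update_self, Function.update_of_ne (by omega)] at hij
      exact (hwv j hj hij.symm).elim
    · rfl
  vertex_mem i hi := by
    rw [Function.update_of_ne (by omega)]
    rcases Nat.lt_succ_iff_lt_or_eq.1 hi with hi | rfl
    · rw [Function.update_of_ne (by omega), Function.update_of_ne (by omega)]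
      exact hp.vertex_mem i hi
    · rw [Function.update_self, Function.update_self]
      exact ⟨hwn, hwf⟩

theorem cycleOfLen_succ (hp : IsHyperpath E e v n) (hn : 1 ≤ n) {w : V} (hw₀ : w ∈ e 0)
    (hwn : w ∈ e n) (hwv : ∀ i < n, v i ≠ w) : CycleOfLen E (n + 1) := by
  refine ⟨by omega, fun t => if (t : ℕ) < n then v t else w, fun t => e t, ?_, ?_, ?_, ?_⟩
  · intro a b hab
    have ha := a.isLt
    have hb := b.isLt
    simp only at hab
    split_ifs at hab with h₁ h₂ h₂
    · exact Fin.ext (hp.injOn_vertex h₁ h₂ hab)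
    · exact (hwv a h₁ hab).elim
    · exact (hwv b h₂ hab.symm).elim
    · exact Fin.ext (by omega)
  · intro a b hab
    exact Fin.ext (hp.injOn_edge (show (a : ℕ) ≤ n by omega) (show (b : ℕ) ≤ n by omega) hab)
  · intro t
    exact hp.mem t (by omega)
  · intro t
    simp only
    split_ifs with ht
    · rw [Nat.mod_eq_of_lt (by omega)]
      exact hp.vertex_mem t ht
    · have htn : (t : ℕ) = n := by omega
      rw [htn, Nat.mod_self]
      exact ⟨hwn, hw₀⟩

theorem cycleOfLen_of_mem (hp : IsHyperpath E e v n) {s : ℕ} (hs : s < n) {w : V}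
    (hws : w ∈ e s) (hwn : w ∈ e n) (hwv : ∀ i, s ≤ i → i < n → v i ≠ w) :
    CycleOfLen E (n - s + 1) :=
  (hp.drop hs.le).cycleOfLen_succ (by omega) (by simpa using hws)
    (by simpa [Nat.add_sub_cancel' hs.le] using hwn) fun i hi => hwv _ (by omega) (by omega)

theorem exists_succ_of_not_isLeaf (hacyc : ¬ ∃ m, CycleOfLen E m)
    (hp : IsHyperpath E e v n) (hleaf : ¬ IsLeaf E (e n)) :
    ∃ (e' : ℕ → Set V) (v' : ℕ → V), IsHyperpath E e' v' (n + 1) := by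
  -- for `n = 0` the vertex `v (n - 1)` is meaningless, but then any choice works
  unfold IsLeaf at hleaf
  push Not at hleaf
  obtain ⟨w, hwn, ⟨f, hf, hfn, hwf⟩, hwu⟩ := hleaf (v (n - 1))
  by_cases hwv : ∃ i < n, v i = w
  · obtain ⟨i, hi, rfl⟩ := hwv
    have hi' : i + 1 < n := by
      by_contra h
      exact hwu (by rw [show n - 1 = i by omega])
    refine (hacyc ⟨_, hp.cycleOfLen_of_mem hi' (hp.vertex_mem i hi).2 hwn ?_⟩).elim
    intro t ht _ hvt
    have := hp.injOn_vertex (show t < n by omega) hi hvt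
    omega
  push Not at hwv
  by_cases hfe : ∃ j ≤ n, e j = f
  · obtain ⟨j, hj, rfl⟩ := hfe
    have hjn : j < n := lt_of_le_of_ne hj fun h => hfn (by rw [h])
    exact (hacyc ⟨_, hp.cycleOfLen_of_mem hjn hwf hwn fun i _ hi => hwv i hi⟩).elim
  push Not at hfe
  exact ⟨_, _, hp.snoc hf hfe hwn hwf hwv⟩

theorem succ_le_ncard (hp : IsHyperpath E e v n) (hfin : E.Finite) : n + 1 ≤ E.ncard := by
  calc n + 1 = (e '' Set.Iic n).ncard := by rw [hp.injOn_edge.ncard_image, Set.ncard_Iic_nat]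
    _ ≤ E.ncard := Set.ncard_le_ncard (by rintro _ ⟨i, hi, rfl⟩; exact hp.mem i hi) hfin

end IsHyperpath

theorem exists_isLeaf [Nonempty V] (hfin : E.Finite) (hE : E.Nonempty)
    (hacyc : ¬ ∃ m, CycleOfLen E m) : ∃ e ∈ E, IsLeaf E e := by
  by_contra! hleaf
  obtain ⟨e₀, he₀⟩ := hE
  have hpath : ∀ n, ∃ (e : ℕ → Set V) (v : ℕ → V), IsHyperpath E e v n := by
    intro n
    induction n with
    | zero =>
      refine ⟨fun _ => e₀, fun _ => Classical.arbitrary V, fun _ _ => he₀, ?_, by simp, by simp⟩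
      intro i hi j hj _
      simp only [Set.mem_Iic, Nat.le_zero] at hi hj
      omega
    | succ n ih =>
      obtain ⟨e, v, hp⟩ := ih
      exact hp.exists_succ_of_not_isLeaf hacyc (hleaf _ (hp.mem n le_rfl))
  obtain ⟨e, v, hp⟩ := hpath E.ncard
  have := hp.succ_le_ncard hfin
  omega

/-- every finite hyperforest with at least one hyperedge contains a
leaf: a hyperedge `e` such that at most one vertex of `e` lies in another hyperedge. -/
theorem stmt2 {V : Type} [Fintype V] (E : Set (Set V))
    (hne : ∀ e ∈ E, e.Nonempty) (hE : E.Nonempty)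
    (hforest : ¬ ∃ m, CycleOfLen E m) :
    ∃ e ∈ E, ∃ u : V, ∀ v ∈ e, (∃ e' ∈ E, e' ≠ e ∧ v ∈ e') → v = u := by
  obtain ⟨e₀, he₀⟩ := hE
  obtain ⟨x₀, -⟩ := hne e₀ he₀
  have : Nonempty V := ⟨x₀⟩
  exact exists_isLeaf (Set.toFinite E) ⟨e₀, he₀⟩ hforest
end

section
/- Let k ≥ 3 and let E_k be the k-uniform hypergraph on k vertices with exactly one hyperedge (the whole vertex set). Then every finite k-uniform hyperforest F satisfies the separation conditions with respect to E_k: (SEP1) there is a homomorphism F → E_k; (SEP2) for distinct x,y in F there is a homomorphism F → E_k separating x and y; (SEP3) for every k-tuple of vertices of F that is not a hyperedge tuple, some homomorphism maps it to a non-hyperedge tuple of E_k. Consequently every finite k-uniform hyperforest embeds into a finite direct power of E_k. -/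
/-- A homomorphism from the k-uniform hypergraph `(V,E)` to `E_k` (the
k-uniform hypergraph with vertex set `Fin k` and one hyperedge): a map sending
each hyperedge-tuple to a tuple enumerating `Fin k` without repetition. -/
def IsHomToEk {V : Type} (k : ℕ) (E : Set (Set V)) (f : V → Fin k) : Prop :=
  ∀ t : Fin k → V, Set.range t ∈ E → Function.Bijective (f ∘ t)

open Set Function

variable {V : Type}

def SharesEdge (E : Set (Set V)) (x y : V) : Prop := ∃ e ∈ E, x ∈ e ∧ y ∈ e

theorem SharesEdge.symm {E : Set (Set V)} {x y : V} : SharesEdge E x y → SharesEdge E y x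
  | ⟨e, he, hx, hy⟩ => ⟨e, he, hy, hx⟩

theorem SharesEdge.mono {E F : Set (Set V)} (hEF : E ⊆ F) {x y : V} :
    SharesEdge E x y → SharesEdge F x y
  | ⟨e, he, hx, hy⟩ => ⟨e, hEF he, hx, hy⟩

def IsStrongColoring {α : Type*} (E : Set (Set V)) (f : V → α) : Prop := ∀ e ∈ E, InjOn f e

theorem exists_injOn_extend {α β : Type*} [Fintype β] {s t : Set α} (hs : s.Finite)
    (hcard : s.ncard = Fintype.card β) (hts : t ⊆ s) {g : α → β} (hg : InjOn g t) :
    ∃ g' : α → β, InjOn g' s ∧ EqOn g' g t := by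
  classical
  have := hs.fintype
  obtain ⟨h, hh⟩ := MapsTo.exists_equiv_extend_of_card_eq (t := Finset.univ)
    (s := ((↑) : s → α) ⁻¹' t) (f := g ∘ (↑))
    (by rw [Finset.card_univ, ← hcard, ← Nat.card_coe_set_eq, Nat.card_eq_fintype_card])
    (fun _ _ => Finset.mem_coe.2 (Finset.mem_univ _))
    (fun a ha b hb hab => Subtype.ext (hg ha hb hab))
  refine ⟨fun a => if ha : a ∈ s then h ⟨a, ha⟩ else g a, fun a ha b hb hab => ?_,
    fun a ha => ?_⟩
  · simp only [ha, hb, dite_true] at hab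
    simpa using h.injective (Subtype.ext hab)
  · simp only [hts ha, dite_true]
    exact hh ⟨a, hts ha⟩ ha

theorem Set.InjOn.update_insert {α β : Type*} [DecidableEq α] {g : α → β} {s : Set α} {a : α}
    {b : β} (hg : InjOn g s) (ha : a ∉ s) (hb : b ∉ g '' s) :
    InjOn (update g a b) (insert a s) := by
  have heq : EqOn (update g a b) g s := fun x hx => update_of_ne (ne_of_mem_of_not_mem hx ha) _ _
  rw [injOn_insert ha, update_self, heq.image_eq]
  exact ⟨hg.congr heq.symm, hb⟩

theorem IsStrongColoring.isHomToEk {k : ℕ} {E : Set (Set V)} (huniform : ∀ e ∈ E, e.ncard = k)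
    {f : V → Fin k} (hf : IsStrongColoring E f) : IsHomToEk k E f := by
  intro t ht
  have ht_inj : Injective t := by
    rw [← injOn_univ]
    apply injOn_of_ncard_image_eq _ finite_univ
    rw [image_univ, huniform _ ht, ncard_univ, Nat.card_eq_fintype_card, Fintype.card_fin]
  exact Finite.injective_iff_bijective.1 fun i j hij =>
    ht_inj (hf _ ht (mem_range_self i) (mem_range_self j) hij)

theorem CycleOfLen.mono {E F : Set (Set V)} (hEF : E ⊆ F) {m : ℕ} :
    CycleOfLen E m → CycleOfLen F m
  | ⟨hm, v, e, hv, he, hmem, hinc⟩ => ⟨hm, v, e, hv, he, fun i => hEF (hmem i), hinc⟩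

theorem edge_eq_of_two_common_vertices {E : Set (Set V)} (hforest : ¬∃ m, CycleOfLen E m)
    {e f : Set V} (he : e ∈ E) (hf : f ∈ E) {x y : V} (hxy : x ≠ y)
    (hxe : x ∈ e) (hye : y ∈ e) (hxf : x ∈ f) (hyf : y ∈ f) : e = f := by
  by_contra hef
  refine hforest ⟨2, le_rfl, ![x, y], ![e, f], ?_, ?_, ?_, ?_⟩
  · intro i j; fin_cases i <;> fin_cases j <;> simp [hxy, hxy.symm]
  · intro i j; fin_cases i <;> fin_cases j <;> simp [hef, Ne.symm hef]
  · intro i; fin_cases i <;> assumption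
  · intro i; fin_cases i <;> simp [hxe, hxf, hye, hyf]

theorem exists_edge_of_sharesEdge_triangle {E : Set (Set V)} (hforest : ¬∃ m, CycleOfLen E m)
    {x y w : V} (hxy : x ≠ y) (hyw : y ≠ w) (hwx : w ≠ x) (hxy' : SharesEdge E x y)
    (hyw' : SharesEdge E y w) (hwx' : SharesEdge E w x) :
    ∃ e ∈ E, x ∈ e ∧ y ∈ e ∧ w ∈ e := by
  obtain ⟨a, ha, hxa, hya⟩ := hxy'
  obtain ⟨b, hb, hyb, hwb⟩ := hyw'
  obtain ⟨c, hc, hwc, hxc⟩ := hwx'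
  by_cases hab : a = b
  · exact ⟨a, ha, hxa, hya, hab ▸ hwb⟩
  by_cases hbc : b = c
  · exact ⟨b, hb, hbc ▸ hxc, hyb, hwb⟩
  by_cases hca : c = a
  · exact ⟨a, ha, hxa, hya, hca ▸ hwc⟩
  refine absurd ⟨3, by norm_num, ![y, w, x], ![a, b, c], ?_, ?_, ?_, ?_⟩ hforest
  · intro i j; fin_cases i <;> fin_cases j <;> simp [hxy, hyw, hwx, hxy.symm, hyw.symm, hwx.symm]
  · intro i j
    fin_cases i <;> fin_cases j <;> simp [hab, hbc, hca, Ne.symm hab, Ne.symm hbc, Ne.symm hca]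
  · intro i; fin_cases i <;> assumption
  · intro i; fin_cases i <;> simp [*]

theorem exists_edge_superset_of_pairwise_sharesEdge {E : Set (Set V)}
    (hforest : ¬∃ m, CycleOfLen E m) {S : Set V} (hS : S.Pairwise (SharesEdge E))
    {x y : V} (hx : x ∈ S) (hy : y ∈ S) (hxy : x ≠ y) : ∃ e ∈ E, S ⊆ e := by
  obtain ⟨e, he, hxe, hye⟩ := hS hx hy hxy
  refine ⟨e, he, fun w hw => ?_⟩
  by_cases hwx : w = x
  · exact hwx ▸ hxe
  by_cases hwy : w = y
  · exact hwy ▸ hye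
  obtain ⟨e', he', hxe', hye', hwe'⟩ := exists_edge_of_sharesEdge_triangle hforest hxy
    (Ne.symm hwy) hwx (hS hx hy hxy) (hS hy hw (Ne.symm hwy)) (hS hw hx hwx)
  exact edge_eq_of_two_common_vertices hforest he' he hxy hxe' hye' hxe hye ▸ hwe'

theorem exists_not_sharesEdge_of_range_notMem {k : ℕ} (hk : 2 ≤ k) {E : Set (Set V)}
    (huniform : ∀ e ∈ E, e.ncard = k) (hforest : ¬∃ m, CycleOfLen E m) {t : Fin k → V}
    (ht : Injective t) (htE : range t ∉ E) : ∃ i j, i ≠ j ∧ ¬SharesEdge E (t i) (t j) := by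
  by_contra! h
  have hpair : (range t).Pairwise (SharesEdge E) := by
    rintro _ ⟨i, rfl⟩ _ ⟨j, rfl⟩ hij
    exact h i j fun hij' => hij (congrArg t hij')
  obtain ⟨e, he, hte⟩ := exists_edge_superset_of_pairwise_sharesEdge hforest hpair
    (mem_range_self ⟨0, by omega⟩) (mem_range_self ⟨1, by omega⟩) (ht.ne (by simp [Fin.ext_iff]))
  have hcard : e.ncard = (range t).ncard := by
    rw [huniform e he, ← image_univ, ncard_image_of_injective _ ht, ncard_univ, Nat.card_fin]
  have he_fin : e.Finite := finite_of_ncard_ne_zero (by rw [huniform e he]; omega)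
  exact htE (eq_of_subset_of_ncard_le hte hcard.le he_fin ▸ he)

/-- The Berge path `e 0, v 0, e 1, …, v (n - 1), e n`. -/
structure IsBergePath (E : Set (Set V)) (e : ℕ → Set V) (v : ℕ → V) (n : ℕ) : Prop where
  edge_mem : ∀ i ≤ n, e i ∈ E
  injOn_edge : InjOn e (Iic n)
  injOn_vertex : InjOn v (Iio n)
  vertex_mem : ∀ i < n, v i ∈ e i ∧ v i ∈ e (i + 1)

namespace IsBergePath

variable {E : Set (Set V)} {e : ℕ → Set V} {v : ℕ → V} {n : ℕ}

theorem lt_card [Finite V] (h : IsBergePath E e v n) : n < Nat.card (Set V) := by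
  have : Injective fun i : Fin (n + 1) => e i := fun i j hij =>
    Fin.ext (h.injOn_edge (mem_Iic.2 i.is_le) (mem_Iic.2 j.is_le) hij)
  simpa using Nat.card_le_card_of_injective _ this

theorem drop (h : IsBergePath E e v n) {j : ℕ} (hj : j ≤ n) :
    IsBergePath E (fun i => e (j + i)) (fun i => v (j + i)) (n - j) where
  edge_mem i hi := h.edge_mem _ (by omega)
  injOn_edge i hi i' hi' hii' := by
    rw [mem_Iic] at hi hi'
    have := h.injOn_edge (mem_Iic.2 (by omega)) (mem_Iic.2 (by omega)) hii'
    omega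
  injOn_vertex i hi i' hi' hii' := by
    rw [mem_Iio] at hi hi'
    have := h.injOn_vertex (mem_Iio.2 (by omega)) (mem_Iio.2 (by omega)) hii'
    omega
  vertex_mem i hi := h.vertex_mem _ (by omega)

theorem injOn_update_vertex (h : IsBergePath E e v n) {w : V} (hwv : w ∉ v '' Iio n) :
    InjOn (update v n w) (Iio (n + 1)) := by
  rw [← Order.succ_eq_add_one, Order.Iio_succ, ← Iio_insert]
  exact h.injOn_vertex.update_insert (by simp) hwv

theorem snoc (h : IsBergePath E e v n) {f : Set V} {w : V} (hf : f ∈ E) (hfe : f ∉ e '' Iic n)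
    (hw : w ∈ e n) (hwf : w ∈ f) (hwv : w ∉ v '' Iio n) :
    IsBergePath E (update e (n + 1) f) (update v n w) (n + 1) where
  edge_mem i hi := by
    rcases hi.lt_or_eq with hi | rfl
    · rw [update_of_ne (by omega)]
      exact h.edge_mem i (by omega)
    · rwa [update_self]
  injOn_edge := by
    rw [← Order.succ_eq_add_one, Order.Iic_succ]
    exact h.injOn_edge.update_insert (by simp) hfe
  injOn_vertex := h.injOn_update_vertex hwv
  vertex_mem i hi := by
    rcases (Nat.lt_succ_iff.1 hi).lt_or_eq with hi | rfl
    · rw [update_of_ne (by omega), update_of_ne (by omega), update_of_ne (by omega)]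
      exact h.vertex_mem i hi
    · rw [update_self, update_self, update_of_ne (by omega)]
      exact ⟨hw, hwf⟩

theorem cycleOfLen (h : IsBergePath E e v n) (hn : 1 ≤ n) {w : V} (hwn : w ∈ e n)
    (hw0 : w ∈ e 0) (hwv : w ∉ v '' Iio n) : CycleOfLen E (n + 1) := by
  refine ⟨by omega, fun i => update v n w i, fun i => e i,
    fun i j hij => Fin.ext (h.injOn_update_vertex hwv (mem_Iio.2 i.2) (mem_Iio.2 j.2) hij),
    fun i j hij => Fin.ext (h.injOn_edge (mem_Iic.2 (by omega)) (mem_Iic.2 (by omega)) hij),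
    fun i => h.edge_mem i (by omega), fun ⟨i, hi⟩ => ?_⟩
  change update v n w i ∈ e i ∧ update v n w i ∈ e ((i + 1) % (n + 1))
  rcases (Nat.lt_succ_iff.1 hi).lt_or_eq with hi | rfl
  · rw [update_of_ne hi.ne, Nat.mod_eq_of_lt (by omega)]
    exact h.vertex_mem i hi
  · rw [update_self, Nat.mod_self]
    exact ⟨hwn, hw0⟩

theorem exists_cycleOfLen (h : IsBergePath E e v n) {w : V} (hwn : w ∈ e n)
    (hw : w ≠ v (n - 1)) {j : ℕ} (hj : j < n) (hwj : w ∈ e j) : ∃ m, CycleOfLen E m := by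
  classical
  -- close the cycle through the last edge before `e n` that contains `w`
  set j₀ := Nat.findGreatest (fun i => w ∈ e i) (n - 1)
  have hj₀ : w ∈ e j₀ := Nat.findGreatest_spec (P := (w ∈ e ·)) (m := j) (by omega) hwj
  have hj₀n : j₀ < n := (Nat.findGreatest_le (n - 1)).trans_lt (by omega)
  refine ⟨n - j₀ + 1, (h.drop hj₀n.le).cycleOfLen (by omega) (by rwa [Nat.add_sub_cancel' hj₀n.le])
    hj₀ ?_⟩
  rintro ⟨i, hi, hvi⟩
  rw [mem_Iio] at hi
  rcases (show j₀ + i + 1 < n ∨ j₀ + i = n - 1 by omega) with hlt | heq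
  · exact Nat.findGreatest_is_greatest (P := (w ∈ e ·)) (n := n - 1) (k := j₀ + i + 1)
      (by omega) (by omega) (hvi ▸ (h.vertex_mem (j₀ + i) (by omega)).2)
  · exact hw (hvi ▸ congrArg v heq)

end IsBergePath

structure IsLeaf_s3 (E : Set (Set V)) (e : Set V) (z : V) : Prop where
  mem : e ∈ E
  root_mem : z ∈ e
  inter_subset : ∀ e' ∈ E, e' ≠ e → e' ∩ e ⊆ {z}

theorem exists_isLeaf_s3 [Finite V] {E : Set (Set V)} (hE : E.Nonempty)
    (hne : ∀ e ∈ E, e.Nonempty) (hforest : ¬∃ m, CycleOfLen E m) : ∃ e z, IsLeaf_s3 E e z := by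
  by_contra hno
  have hbranch : ∀ e ∈ E, ∀ z ∈ e, ∃ f ∈ E, f ≠ e ∧ ∃ w ∈ f, w ∈ e ∧ w ≠ z := by
    intro e he z hz
    by_contra! h
    exact hno ⟨e, z, he, hz, fun f hf hfe w hw => h f hf hfe w hw.1 hw.2⟩
  -- without leaves every Berge path can be prolonged, but their lengths are bounded
  have hpath : ∀ n, ∃ e v, IsBergePath E e v n := by
    intro n
    induction n with
    | zero =>
      obtain ⟨e₀, he₀⟩ := hE
      exact ⟨fun _ => e₀, fun _ => (hne e₀ he₀).some, fun _ _ => he₀,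
        fun i hi j hj _ => by simp_all, fun i hi => by simp at hi, fun i hi => by simp at hi⟩
    | succ n ih =>
      obtain ⟨e, v, h⟩ := ih
      obtain ⟨z, hz, hzv⟩ : ∃ z ∈ e n, 0 < n → z = v (n - 1) := by
        rcases n with _ | n
        · exact ⟨_, (hne _ (h.edge_mem 0 le_rfl)).some_mem, by omega⟩
        · exact ⟨v n, (h.vertex_mem n (by omega)).2, fun _ => rfl⟩
      obtain ⟨f, hf, hfe, w, hwf, hwe, hwz⟩ := hbranch _ (h.edge_mem n le_rfl) z hz
      by_cases hnew : f ∉ e '' Iic n ∧ w ∉ v '' Iio n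
      · exact ⟨_, _, h.snoc hf hnew.1 hwe hwf hnew.2⟩
      exfalso
      obtain ⟨j, hjn, hwj⟩ : ∃ j < n, w ∈ e j := by
        rw [not_and_or, not_not, not_not] at hnew
        rcases hnew with ⟨j, hj, rfl⟩ | ⟨i, hi, rfl⟩
        · exact ⟨j, (mem_Iic.1 hj).lt_of_ne (by rintro rfl; exact hfe rfl), hwf⟩
        · exact ⟨i, hi, (h.vertex_mem i hi).1⟩
      exact hforest (h.exists_cycleOfLen hwe (hzv (by omega) ▸ hwz) hjn hwj)
  obtain ⟨e, v, h⟩ := hpath (Nat.card (Set V))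
  exact h.lt_card.false

theorem leaf_induction [Finite V] {k : ℕ} (hk : 0 < k) {P : Set (Set V) → Prop} (empty : P ∅)
    (step : ∀ E e z, (∀ e ∈ E, e.ncard = k) → (¬∃ m, CycleOfLen E m) → IsLeaf_s3 E e z →
      P (E \ {e}) → P E)
    {E : Set (Set V)} (huniform : ∀ e ∈ E, e.ncard = k) (hforest : ¬∃ m, CycleOfLen E m) :
    P E := by
  induction hn : E.ncard using Nat.strong_induction_on generalizing E with
  | _ n ih =>
  rcases E.eq_empty_or_nonempty with rfl | hE
  · exact empty
  obtain ⟨e, z, hleaf⟩ := exists_isLeaf_s3 hE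
    (fun e he => nonempty_of_ncard_ne_zero (by rw [huniform e he]; omega)) hforest
  refine step E e z huniform hforest hleaf (ih _ ?_ (fun e' he' => huniform e' he'.1)
    (fun ⟨m, hm⟩ => hforest ⟨m, hm.mono sdiff_subset⟩) rfl)
  exact hn ▸ ncard_sdiff_singleton_lt_of_mem hleaf.mem

namespace IsLeaf_s3

variable [Finite V] {β : Type*} [Fintype β] {E : Set (Set V)} {e : Set V} {z : V}

theorem exists_strongColoring_extend (hleaf : IsLeaf_s3 E e z)
    (he : e.ncard = Fintype.card β) {f : V → β} (hf : IsStrongColoring (E \ {e}) f)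
    {T : Set V} (hTe : T ⊆ e) (hzT : z ∈ T) {g : V → β} (hg : InjOn g T) (hgz : g z = f z) :
    ∃ f' : V → β, IsStrongColoring E f' ∧ EqOn f' g T ∧ EqOn f' f (e \ {z})ᶜ := by
  classical
  obtain ⟨g', hg'_inj, hg'_eq⟩ := exists_injOn_extend (toFinite e) he hTe hg
  have hg'z : g' z = f z := (hg'_eq hzT).trans hgz
  have h_out : EqOn (e.piecewise g' f) f (e \ {z})ᶜ := by
    intro v hv
    by_cases hve : v ∈ e
    · have hvz : v = z := by simpa [hve] using hv
      rw [piecewise_eq_of_mem _ _ _ hve, hvz, hg'z]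
    · exact piecewise_eq_of_notMem _ _ _ hve
  refine ⟨e.piecewise g' f, fun e' he' => ?_, fun v hv => ?_, h_out⟩
  · by_cases he'e : e' = e
    · subst he'e
      exact hg'_inj.congr (piecewise_eqOn _ _ _).symm
    · refine (hf e' ⟨he', he'e⟩).congr fun v hv => (h_out ?_).symm
      rintro ⟨hve, hvz⟩
      exact hvz (hleaf.inter_subset e' he' he'e ⟨hv, hve⟩)
  · rw [piecewise_eq_of_mem _ _ _ (hTe hv), hg'_eq hv]

theorem exists_strongColoring_eqOn (hleaf : IsLeaf_s3 E e z)
    (he : e.ncard = Fintype.card β) {f : V → β} (hf : IsStrongColoring (E \ {e}) f) :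
    ∃ f' : V → β, IsStrongColoring E f' ∧ EqOn f' f (e \ {z})ᶜ := by
  obtain ⟨f', hf', -, hf'f⟩ := hleaf.exists_strongColoring_extend he hf
    (singleton_subset_iff.2 hleaf.root_mem) rfl (injOn_singleton f z) rfl
  exact ⟨f', hf', hf'f⟩

theorem exists_strongColoring_update (hleaf : IsLeaf_s3 E e z)
    (he : e.ncard = Fintype.card β) {f : V → β} (hf : IsStrongColoring (E \ {e}) f)
    {x : V} (hx : x ∈ e \ {z}) {c : β} (hc : c ≠ f z) :
    ∃ f' : V → β, IsStrongColoring E f' ∧ f' x = c ∧ EqOn f' f (e \ {z})ᶜ := by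
  classical
  have hzx : z ≠ x := fun h => hx.2 h.symm
  have hg : InjOn (update f x c) {z, x} := injOn_pair.2 fun h => by
    rw [update_of_ne hzx, update_self] at h
    exact absurd h.symm hc
  obtain ⟨f', hf', hf'x, hf'f⟩ := hleaf.exists_strongColoring_extend he hf
    (insert_subset hleaf.root_mem (singleton_subset_iff.2 hx.1)) (mem_insert z _) hg
    (update_of_ne hzx _ _)
  exact ⟨f', hf', by rw [hf'x (mem_insert_of_mem _ rfl), update_self], hf'f⟩

end IsLeaf_s3

section Coloring

variable [Finite V] {k : ℕ} {E : Set (Set V)}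

theorem exists_strongColoring (hk : 0 < k) (huniform : ∀ e ∈ E, e.ncard = k)
    (hforest : ¬∃ m, CycleOfLen E m) : ∃ f : V → Fin k, IsStrongColoring E f := by
  refine leaf_induction hk (P := fun E => ∃ f : V → Fin k, IsStrongColoring E f)
    ⟨fun _ => ⟨0, hk⟩, fun e he => he.elim⟩ (fun E e z huniform _ hleaf ⟨f, hf⟩ => ?_)
    huniform hforest
  obtain ⟨f', hf', -⟩ := hleaf.exists_strongColoring_eqOn (by simpa using huniform e hleaf.mem) hf
  exact ⟨f', hf'⟩

theorem exists_strongColoring_ne (hk : 3 ≤ k) (huniform : ∀ e ∈ E, e.ncard = k)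
    (hforest : ¬∃ m, CycleOfLen E m) {x y : V} (hxy : x ≠ y) :
    ∃ f : V → Fin k, IsStrongColoring E f ∧ f x ≠ f y := by
  classical
  refine leaf_induction (by omega)
    (P := fun E => ∀ x y : V, x ≠ y → ∃ f : V → Fin k, IsStrongColoring E f ∧ f x ≠ f y)
    (fun x y hxy => ⟨fun v => if v = x then ⟨0, by omega⟩ else ⟨1, by omega⟩,
      fun e he => he.elim, by simp [hxy.symm]⟩) (fun E e z huniform _ hleaf ih => ?_)
    huniform hforest x y hxy
  have he : e.ncard = Fintype.card (Fin k) := by simpa using huniform e hleaf.mem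
  -- as `k ≥ 3`, a vertex of `e \ {z}` can get a colour other than those of `z` and `y`
  have hleft : ∀ x y, x ∈ e \ {z} → y ∉ e \ {z} →
      ∃ f : V → Fin k, IsStrongColoring E f ∧ f x ≠ f y := by
    intro x y hx hy
    obtain ⟨f, hf, -⟩ := ih x y (ne_of_mem_of_not_mem hx hy)
    obtain ⟨c, hcy, hcz⟩ := ENat.exists_ne_ne_of_three_le (α := Fin k) (by simpa) (f y) (f z)
    obtain ⟨f', hf', hf'x, hf'f⟩ := hleaf.exists_strongColoring_update he hf hx hcz
    exact ⟨f', hf', by rwa [hf'x, hf'f hy]⟩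
  intro x y hxy
  by_cases hx : x ∈ e \ {z} <;> by_cases hy : y ∈ e \ {z}
  · obtain ⟨f, hf, -⟩ := ih x y hxy
    obtain ⟨f', hf', -⟩ := hleaf.exists_strongColoring_eqOn he hf
    exact ⟨f', hf', (hf' e hleaf.mem).ne hx.1 hy.1 hxy⟩
  · exact hleft x y hx hy
  · obtain ⟨f, hf, hfyx⟩ := hleft y x hy hx
    exact ⟨f, hf, hfyx.symm⟩
  · obtain ⟨f, hf, hfxy⟩ := ih x y hxy
    obtain ⟨f', hf', hf'f⟩ := hleaf.exists_strongColoring_eqOn he hf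
    exact ⟨f', hf', by rwa [hf'f hx, hf'f hy]⟩

theorem exists_strongColoring_eq (hk : 3 ≤ k) (huniform : ∀ e ∈ E, e.ncard = k)
    (hforest : ¬∃ m, CycleOfLen E m) {x y : V} (hxy : ¬SharesEdge E x y) :
    ∃ f : V → Fin k, IsStrongColoring E f ∧ f x = f y := by
  refine leaf_induction (by omega)
    (P := fun E => ∀ x y : V, ¬SharesEdge E x y → ∃ f : V → Fin k, IsStrongColoring E f ∧ f x = f y)
    (fun x y _ => ⟨fun _ => ⟨0, by omega⟩, fun e he => he.elim, rfl⟩)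
    (fun E e z huniform hforest hleaf ih => ?_) huniform hforest x y hxy
  have he : e.ncard = Fintype.card (Fin k) := by simpa using huniform e hleaf.mem
  have hleft : ∀ x y, x ∈ e \ {z} → y ∉ e \ {z} → ¬SharesEdge E x y →
      ∃ f : V → Fin k, IsStrongColoring E f ∧ f x = f y := by
    intro x y hx hy hxy
    have hzy : z ≠ y := by
      rintro rfl
      exact hxy ⟨e, hleaf.mem, hx.1, hleaf.root_mem⟩
    obtain ⟨f, hf, hfzy⟩ := exists_strongColoring_ne hk
      (fun e' (he' : e' ∈ E \ {e}) => huniform e' he'.1)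
      (fun ⟨m, hm⟩ => hforest ⟨m, hm.mono sdiff_subset⟩) hzy
    obtain ⟨f', hf', hf'x, hf'f⟩ := hleaf.exists_strongColoring_update he hf hx (Ne.symm hfzy)
    exact ⟨f', hf', by rw [hf'x, hf'f hy]⟩
  intro x y hxy
  by_cases hx : x ∈ e \ {z} <;> by_cases hy : y ∈ e \ {z}
  · exact absurd ⟨e, hleaf.mem, hx.1, hy.1⟩ hxy
  · exact hleft x y hx hy hxy
  · obtain ⟨f, hf, hfyx⟩ := hleft y x hy hx fun h => hxy h.symm
    exact ⟨f, hf, hfyx.symm⟩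
  · obtain ⟨f, hf, hfxy⟩ := ih x y fun h => hxy (h.mono sdiff_subset)
    obtain ⟨f', hf', hf'f⟩ := hleaf.exists_strongColoring_eqOn he hf
    exact ⟨f', hf', by rwa [hf'f hx, hf'f hy]⟩

theorem exists_isHomToEk_not_bijective (hk : 3 ≤ k) (huniform : ∀ e ∈ E, e.ncard = k)
    (hforest : ¬∃ m, CycleOfLen E m) {t : Fin k → V} (htE : range t ∉ E) :
    ∃ f : V → Fin k, IsHomToEk k E f ∧ ¬Bijective (f ∘ t) := by
  by_cases ht : Injective t
  · obtain ⟨i, j, hij, hnot⟩ :=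
      exists_not_sharesEdge_of_range_notMem (by omega) huniform hforest ht htE
    obtain ⟨f, hf, hfij⟩ := exists_strongColoring_eq hk huniform hforest hnot
    exact ⟨f, hf.isHomToEk huniform, fun hbij => hij (hbij.injective hfij)⟩
  · obtain ⟨f, hf⟩ := exists_strongColoring (by omega) huniform hforest
    exact ⟨f, hf.isHomToEk huniform, fun hbij => ht hbij.injective.of_comp⟩

theorem exists_embedding_of_separating
    (hsep : ∀ x y : V, x ≠ y → ∃ f : V → Fin k, IsHomToEk k E f ∧ f x ≠ f y)
    (hedge : ∀ t : Fin k → V, range t ∉ E →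
      ∃ f : V → Fin k, IsHomToEk k E f ∧ ¬Bijective (f ∘ t)) :
    ∃ (I : Type) (_ : Finite I) (g : V → I → Fin k), Injective g ∧
      ∀ t : Fin k → V, range t ∈ E ↔ ∀ i : I, Bijective fun j => g (t j) i := by
  refine ⟨{f : V → Fin k // IsHomToEk k E f}, inferInstance, fun v f => f.1 v,
    fun x y hxy => ?_, fun t => ⟨fun ht f => f.2 t ht, fun h => ?_⟩⟩
  · by_contra hne
    obtain ⟨f, hf, hfxy⟩ := hsep x y hne
    exact hfxy (congrFun hxy ⟨f, hf⟩)
  · by_contra htE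
    obtain ⟨f, hf, hnot⟩ := hedge t htE
    exact hnot (h ⟨f, hf⟩)

end Coloring

/-- for `k ≥ 3`, every finite k-uniform hyperforest satisfies
(SEP1)–(SEP3) with respect to `E_k`, and consequently embeds in a finite
direct power of `E_k`. -/
theorem stmt3 {V : Type} [Fintype V] (k : ℕ) (hk : 3 ≤ k) (E : Set (Set V))
    (huniform : ∀ e ∈ E, e.ncard = k)
    (hforest : ¬ ∃ m, CycleOfLen E m) :
    (∃ f : V → Fin k, IsHomToEk k E f) ∧
    (∀ x y : V, x ≠ y → ∃ f : V → Fin k, IsHomToEk k E f ∧ f x ≠ f y) ∧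
    (∀ t : Fin k → V, Set.range t ∉ E →
      ∃ f : V → Fin k, IsHomToEk k E f ∧ ¬ Function.Bijective (f ∘ t)) ∧
    (∃ (I : Type) (_ : Finite I) (g : V → I → Fin k), Function.Injective g ∧
      ∀ t : Fin k → V, Set.range t ∈ E ↔ ∀ i : I, Function.Bijective fun j => g (t j) i) := by
  have hsep1 : ∃ f : V → Fin k, IsHomToEk k E f :=
    (exists_strongColoring (by omega) huniform hforest).imp fun _ hf => hf.isHomToEk huniform
  have hsep2 : ∀ x y : V, x ≠ y → ∃ f : V → Fin k, IsHomToEk k E f ∧ f x ≠ f y :=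
    fun x y hxy => (exists_strongColoring_ne hk huniform hforest hxy).imp
      fun _ hf => ⟨hf.1.isHomToEk huniform, hf.2⟩
  have hsep3 : ∀ t : Fin k → V, range t ∉ E →
      ∃ f : V → Fin k, IsHomToEk k E f ∧ ¬Bijective (f ∘ t) :=
    fun _ htE => exists_isHomToEk_not_bijective hk huniform hforest htE
  exact ⟨hsep1, hsep2, hsep3, exists_embedding_of_separating hsep2 hsep3⟩
end

section
/- Let k > ℓ > 1 and let E be the hypergraph on ℓ vertices with exactly one hyperedge (the whole vertex set), treated as a k-hypergraph structure (so its relation consists of all k-tuples whose coordinate set is the full vertex set). Then the k-uniform hypergraph E_k on k vertices with exactly one hyperedge lies in SP(E); equivalently, E_k satisfies the separation conditions (SEP1)–(SEP3) with respect to E. -/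
/-!
Every surjection `f : Fin k → Fin ℓ` is a homomorphism `E_k → E`, since `f ∘ t` is surjective
whenever `t` is a bijection. It therefore suffices to find, for each point `a`, a surjection
whose fibre over some value is exactly `{a}`: such an `f` separates `a` from every other point,
and if `a` is missed by a tuple `t` then `f ∘ t` misses that value. Such an `f` is a retraction
of an injection `Fin ℓ → Fin k` through `a`, sending every point off its range to a second value.
-/

open Function

section Retraction

variable {α β : Type*} {e : β → α}

theorem Function.Injective.surjective_extend_id_const (he : Injective e) (c : β) :
    Surjective (extend e id fun _ : α => c) :=
  fun b => ⟨e b, he.extend_apply id _ b⟩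

theorem Function.Injective.eq_of_extend_id_const_apply_eq (he : Injective e) {b c : β}
    (hbc : b ≠ c) {x : α} (hx : extend e id (fun _ : α => c) x = b) : x = e b := by
  by_cases hmem : ∃ b', e b' = x
  · obtain ⟨b', rfl⟩ := hmem
    rw [he.extend_apply] at hx
    rw [← hx, id]
  · rw [extend_apply' _ _ _ hmem] at hx
    exact absurd hx.symm hbc

theorem exists_surjective_forall_apply_eq_iff [Fintype α] [Fintype β] [Nontrivial β]
    (hcard : Fintype.card β ≤ Fintype.card α) (a : α) :
    ∃ (f : α → β) (b : β), Surjective f ∧ ∀ x, f x = b ↔ x = a := by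
  classical
  obtain ⟨b, c, hbc⟩ := exists_pair_ne β
  obtain ⟨e₀⟩ := Function.Embedding.nonempty_of_card_le hcard
  set e : β → α := Equiv.swap (e₀ b) a ∘ e₀
  have he : Injective e := (Equiv.swap _ _).injective.comp e₀.injective
  have heb : e b = a := Equiv.swap_apply_left _ _
  refine ⟨extend e id fun _ => c, b, he.surjective_extend_id_const c, fun x => ⟨?_, ?_⟩⟩
  · exact fun hx => heb ▸ he.eq_of_extend_id_const_apply_eq hbc hx
  · rintro rfl
    rw [← heb]
    exact he.extend_apply id _ b

end Retraction

/-- for `k > ℓ > 1`, the k-uniform single-hyperedge hypergraph `E_k`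
(on `Fin k`, relation = tuples enumerating `Fin k` without repetition, i.e.
bijections) satisfies (SEP1)–(SEP3) with respect to the single-hyperedge
hypergraph `E` on `Fin ℓ` viewed as a k-hypergraph structure (relation = all
k-tuples whose coordinate set is all of `Fin ℓ`, i.e. surjections). -/
theorem stmt4 (k ℓ : ℕ) (h1 : 1 < ℓ) (h2 : ℓ < k) :
    (∃ f : Fin k → Fin ℓ,
      ∀ t : Fin k → Fin k, Function.Bijective t → Function.Surjective (f ∘ t)) ∧
    (∀ x y : Fin k, x ≠ y → ∃ f : Fin k → Fin ℓ,
      (∀ t : Fin k → Fin k, Function.Bijective t → Function.Surjective (f ∘ t)) ∧ f x ≠ f y) ∧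
    (∀ t : Fin k → Fin k, ¬ Function.Bijective t → ∃ f : Fin k → Fin ℓ,
      (∀ t' : Fin k → Fin k, Function.Bijective t' → Function.Surjective (f ∘ t')) ∧
        ¬ Function.Surjective (f ∘ t)) := by
  have : Nontrivial (Fin ℓ) := Fin.nontrivial_iff_two_le.mpr h1
  have hcard : Fintype.card (Fin ℓ) ≤ Fintype.card (Fin k) := by simpa using h2.le
  have comp_bijective {f : Fin k → Fin ℓ} (hf : Surjective f) (t : Fin k → Fin k)
      (ht : Bijective t) : Surjective (f ∘ t) :=
    hf.comp ht.surjective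
  refine ⟨?_, fun x y hxy => ?_, fun t ht => ?_⟩
  · obtain ⟨f, -, hf, -⟩ := exists_surjective_forall_apply_eq_iff hcard (⟨0, by omega⟩ : Fin k)
    exact ⟨f, comp_bijective hf⟩
  · obtain ⟨f, b, hf, hfiber⟩ := exists_surjective_forall_apply_eq_iff hcard x
    exact ⟨f, comp_bijective hf, fun h => hxy ((hfiber y).mp (h ▸ (hfiber x).mpr rfl)).symm⟩
  · obtain ⟨z, hz⟩ := not_forall.mp (mt Finite.surjective_iff_bijective.mp ht)
    obtain ⟨f, b, hf, hfiber⟩ := exists_surjective_forall_apply_eq_iff hcard z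
    exact ⟨f, comp_bijective hf, fun hs => hz ((hs b).imp fun a => (hfiber (t a)).mp)⟩
end

section
/- Let H = ⟨H; r⟩ be a finite loop-free k-hypergraph structure (so no constant tuple (a,...,a) lies in r) containing a hyperedge of cardinality 2, i.e., there exist distinct 0,1 ∈ H with every k-tuple from {0,1} hitting both values lying in r. If k > 2, then for every prime p > |H|, H has no cyclic polymorphism of arity p. -/
/-!
Shifting the arguments of a cyclic polymorphism `f` does not change its value. So if some
`c : ZMod p → H` has every window `(c m, c (m + 1), …, c (m + k - 1))` in `r`, applying `f` to
the `p` windows yields the constant tuple `(f c, …, f c) ∈ r`, against loop-freeness. For `k ≥ 3`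
such a `c` is the sequence alternating between `x` and `y` by the parity of `i.val`: it has no
run of three equal values (the wrap-around from `p - 1` to `0` makes at most one run of two),
so each window takes both values and lies in the hyperedge `{x, y}`.
-/

theorem apply_add_natCast_eq_of_cyclic {G H : Type*} [AddMonoidWithOne G] {f : (G → H) → H}
    (hcyc : ∀ v : G → H, f v = f fun i => v (i + 1)) (n : ℕ) (v : G → H) :
    f (fun i => v (i + n)) = f v := by
  induction n generalizing v with
  | zero => simp
  | succ n ih =>
    simp only [Nat.cast_succ, ← add_assoc]
    exact (ih fun i => v (i + 1)).trans (hcyc v).symm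

theorem not_exists_cyclic_polymorphism_of_forall_window_mem {G H : Type*} [AddMonoidWithOne G]
    {k : ℕ} {r : Set (Fin k → H)} (hloopfree : ∀ a : H, (fun _ : Fin k => a) ∉ r) {c : G → H}
    (hc : ∀ m : G, (fun j : Fin k => c (m + (j : ℕ))) ∈ r) :
    ¬ ∃ f : (G → H) → H,
      (∀ t : G → Fin k → H, (∀ m, t m ∈ r) → (fun j => f fun m => t m j) ∈ r) ∧
      (∀ v : G → H, f v = f fun i => v (i + 1)) := by
  rintro ⟨f, hpoly, hcyc⟩
  have hconst : (fun j : Fin k => f fun m => c (m + (j : ℕ))) = fun _ => f c :=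
    funext fun j => apply_add_natCast_eq_of_cyclic hcyc j c
  exact hloopfree (f c) (hconst ▸ hpoly _ hc)

namespace ZMod

variable {p : ℕ}

theorem exists_even_odd_val_add_lt_three (hp : 1 < p) (m : ZMod p) :
    ∃ i < 3, ∃ j < 3, Even (m + (i : ℕ)).val ∧ Odd (m + (j : ℕ)).val := by
  have : NeZero p := ⟨by omega⟩
  have hval (n : ℕ) : (m + n).val = (m.val + n) % p := by
    rw [val_add, val_natCast, Nat.add_mod_mod]
  rcases Nat.lt_or_eq_of_le m.val_lt with hlt | heq
  · have hsucc : (m + (1 : ℕ)).val = m.val + 1 := by rw [hval, Nat.mod_eq_of_lt hlt]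
    have hzero : (m + (0 : ℕ)).val = m.val := by simp
    rcases Nat.even_or_odd m.val with he | ho
    · exact ⟨0, by norm_num, 1, by norm_num, hzero ▸ he, hsucc ▸ he.add_one⟩
    · exact ⟨1, by norm_num, 0, by norm_num, hsucc ▸ ho.add_one, hzero ▸ ho⟩
  · refine ⟨1, by norm_num, 2, by norm_num, ?_, ?_⟩
    · rw [hval, show m.val + 1 = p by omega, Nat.mod_self]
      exact Even.zero
    · rw [hval, show m.val + 2 = p + 1 by omega, Nat.add_mod_left, Nat.mod_eq_of_lt hp]
      exact odd_one

end ZMod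

def alternating {H : Type*} {p : ℕ} (x y : H) (i : ZMod p) : H :=
  if Even i.val then x else y

theorem range_alternating_window {H : Type*} {p k : ℕ} (hp : 1 < p) (hk : 2 < k) (x y : H)
    (m : ZMod p) :
    Set.range (fun j : Fin k => alternating x y (m + ((j : ℕ) : ZMod p))) = {x, y} := by
  refine subset_antisymm ?_ ?_
  · rintro _ ⟨j, rfl⟩
    simp only [alternating]
    split_ifs <;> simp
  · obtain ⟨i, hi, j, hj, heven, hodd⟩ := ZMod.exists_even_odd_val_add_lt_three hp m
    rintro z (rfl | rfl)
    · exact ⟨⟨i, by omega⟩, by simp [alternating, heven]⟩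
    · exact ⟨⟨j, by omega⟩, by simp [alternating, Nat.not_even_iff_odd.mpr hodd]⟩

theorem stmt9_general {H : Type} (k : ℕ) (hk : 2 < k) (r : Set (Fin k → H))
    (hloopfree : ∀ a : H, (fun _ : Fin k => a) ∉ r)
    (x y : H)
    (hedge : ∀ t : Fin k → H, Set.range t = {x, y} → t ∈ r)
    (p : ℕ) (hp : p.Prime) :
    ¬ ∃ f : (ZMod p → H) → H,
      (∀ t : ZMod p → Fin k → H, (∀ m, t m ∈ r) → (fun j => f fun m => t m j) ∈ r) ∧
      (∀ v : ZMod p → H, f v = f fun i => v (i + 1)) :=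
  not_exists_cyclic_polymorphism_of_forall_window_mem hloopfree fun m =>
    hedge _ (range_alternating_window hp.one_lt hk x y m)

/-- a finite loop-free k-hypergraph structure (with `k > 2`)
containing a hyperedge of cardinality 2 has no cyclic polymorphism of any
prime arity `p > |H|`. -/
theorem stmt9 {H : Type} [Fintype H] (k : ℕ) (hk : 2 < k) (r : Set (Fin k → H))
    (hset : ∀ t ∈ r, ∀ t' : Fin k → H, Set.range t' = Set.range t → t' ∈ r)
    (hloopfree : ∀ a : H, (fun _ : Fin k => a) ∉ r)
    (x y : H) (hxy : x ≠ y)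
    (hedge : ∀ t : Fin k → H, Set.range t = {x, y} → t ∈ r)
    (p : ℕ) (hp : p.Prime) (hpH : Fintype.card H < p) :
    ¬ ∃ f : (ZMod p → H) → H,
      (∀ t : ZMod p → Fin k → H, (∀ m, t m ∈ r) → (fun j => f fun m => t m j) ∈ r) ∧
      (∀ v : ZMod p → H, f v = f fun i => v (i + 1)) :=
  stmt9_general k hk r hloopfree x y hedge p hp
end

section
/- Let H be a loop-free k-hypergraph structure with k > 2 whose minimal hyperedge cardinality d satisfies d > 2. Define the binary relation x_1 ∼ x_2 by ∃x_3...∃x_d (x_1,x_2,x_3,...,x_{d−1},x_d,...,x_d) ∈ r (with x_d repeated k−d+1 times). Then ∼ is exactly the symmetric relation consisting of all pairs of distinct vertices lying in a common hyperedge of cardinality d; equivalently, the graph ⟨H; ∼⟩ is the union of d-cliques on the hyperedges of cardinality d. -/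
/-!
A tuple `(x₁, …, x_d, x_d, …, x_d)` has the same range as `(x₁, …, x_d)`, so it lies in `r` iff
that range, a set with at most `d` elements, is a hyperedge. Since hyperedges have at least `d`
elements, this forces the `xᵢ` to be pairwise distinct and the range to be a hyperedge of size
exactly `d`. Conversely, any enumeration of a `d`-element hyperedge starting with `x₁, x₂`
(which exists when `x₁ ≠ x₂`) is such a tuple.
-/

open Set Function

theorem range_pad_with_last {α : Type*} {k d : ℕ} (hd : 0 < d) (hdk : d ≤ k) (f : Fin d → α) :
    range (fun i : Fin k => if h : (i : ℕ) < d then f ⟨i, h⟩ else f ⟨d - 1, by omega⟩) =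
      range f := by
  refine Subset.antisymm ?_ ?_
  · rintro _ ⟨i, rfl⟩
    dsimp only
    split_ifs <;> exact mem_range_self _
  · rintro _ ⟨j, rfl⟩
    exact ⟨⟨j, by omega⟩, by simp⟩

theorem injective_of_card_le_ncard_range {α β : Type*} [Finite α] {f : α → β}
    (h : Nat.card α ≤ (range f).ncard) : Injective f := by
  rw [← image_univ] at h
  rw [← injOn_univ]
  exact injOn_of_ncard_image_eq (le_antisymm ncard_image_le (by rwa [ncard_univ]))

theorem injective_vecCons_two {β : Type*} {a b : β} (h : a ≠ b) : Injective ![a, b] := by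
  intro p q hpq
  fin_cases p <;> fin_cases q <;> simp_all [eq_comm]

theorem Set.Finite.exists_fin_range_eq_apply_eq {α : Type*} {e : Set α} (he : e.Finite)
    {n : ℕ} (hn : e.ncard = n) {i j : Fin n} (hij : i ≠ j) {x y : α} (hx : x ∈ e) (hy : y ∈ e)
    (hxy : x ≠ y) : ∃ f : Fin n → α, range f = e ∧ f i = x ∧ f j = y := by
  have : Finite e := he
  let g : Fin n ≃ e := (Finite.equivFinOfCardEq (by rwa [Nat.card_coe_set_eq])).symm
  obtain ⟨σ, hσ⟩ := Equiv.Perm.exists_extending_pair ![g i, g j] ![⟨x, hx⟩, ⟨y, hy⟩]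
    (injective_vecCons_two (g.injective.ne hij))
    (injective_vecCons_two (by simpa [Subtype.ext_iff] using hxy))
  refine ⟨fun m => σ (g m), ?_, by simpa using congrArg Subtype.val (hσ 0),
    by simpa using congrArg Subtype.val (hσ 1)⟩
  change range (Subtype.val ∘ σ ∘ g) = e
  rw [range_comp, (σ.surjective.comp g.surjective).range_eq, image_univ,
    Subtype.range_coe]

/-- for a loop-free k-hypergraph structure (k > 2) whose
hyperedge set `E` has minimal hyperedge cardinality `d > 2`, the binary
relation `x₁ ∼ x₂` defined by
`∃ x₃ … x_d, (x₁,x₂,x₃,…,x_{d−1},x_d,…,x_d) ∈ r`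
consists exactly of the pairs of distinct vertices lying in a common
hyperedge of cardinality `d`. -/
theorem stmt11 {H : Type} (k d : ℕ) (hd2 : 2 < d) (hdk : d ≤ k)
    (E : Set (Set H)) (r : Set (Fin k → H))
    (hrE : ∀ t : Fin k → H, t ∈ r ↔ Set.range t ∈ E)
    (hcard : ∀ e ∈ E, e.Finite ∧ d ≤ e.ncard ∧ e.ncard ≤ k) :
    ∀ x₁ x₂ : H,
      ((∃ yv : Fin d → H, yv ⟨0, by omega⟩ = x₁ ∧ yv ⟨1, by omega⟩ = x₂ ∧
        (fun i : Fin k => if h : (i : ℕ) < d then yv ⟨i, h⟩ else yv ⟨d - 1, by omega⟩) ∈ r)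
      ↔ (x₁ ≠ x₂ ∧ ∃ e ∈ E, e.ncard = d ∧ x₁ ∈ e ∧ x₂ ∈ e)) := by
  intro x₁ x₂
  simp only [hrE, range_pad_with_last (by omega : 0 < d) hdk]
  constructor
  · rintro ⟨yv, rfl, rfl, hE⟩
    have hinj : Injective yv :=
      injective_of_card_le_ncard_range (by simpa using (hcard _ hE).2.1)
    refine ⟨hinj.ne (by simp), _, hE, ?_, mem_range_self _, mem_range_self _⟩
    simp [ncard_range_of_injective hinj]
  · rintro ⟨hne, e, hE, he, hx₁, hx₂⟩
    obtain ⟨yv, rfl, h₀, h₁⟩ :=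
      (hcard e hE).1.exists_fin_range_eq_apply_eq he
        (i := ⟨0, by omega⟩) (j := ⟨1, by omega⟩) (by simp) hx₁ hx₂ hne
    exact ⟨yv, h₀, h₁, hE⟩
end

section
/- Let M be a finite relational structure and S a finite structure of the same signature satisfying the separation conditions (SEP1)–(SEP3) with respect to M. Then S is isomorphic to an induced substructure of M^{hom(S,M)}, the direct power of M indexed by the (finite) set of homomorphisms from S to M. -/
section Separation

variable {S M : Type*} {P : (S → M) → Prop}

theorem injective_eval_of_separates
    (hsep : ∀ x y : S, x ≠ y → ∃ g : S → M, P g ∧ g x ≠ g y) :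
    Function.Injective (fun (s : S) (φ : {g : S → M // P g}) => φ.1 s) := by
  intro x y hxy
  by_contra hne
  obtain ⟨g, hg, hgxy⟩ := hsep x y hne
  exact hgxy (congrFun hxy ⟨g, hg⟩)

theorem mem_iff_forall_comp_mem_of_separates {α : Type*} {A : Set (α → S)} {B : Set (α → M)}
    (hpres : ∀ g : S → M, P g → ∀ t ∈ A, g ∘ t ∈ B)
    (hsep : ∀ t : α → S, t ∉ A → ∃ g : S → M, P g ∧ g ∘ t ∉ B) (t : α → S) :
    t ∈ A ↔ ∀ φ : {g : S → M // P g}, φ.1 ∘ t ∈ B := by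
  refine ⟨fun ht φ => hpres φ.1 φ.2 t ht, fun h => ?_⟩
  by_contra ht
  obtain ⟨g, hg, hgt⟩ := hsep t ht
  exact hgt (h ⟨g, hg⟩)

end Separation

theorem stmt12_general {S M : Type} {ι : Type} (ar : ι → ℕ)
    (RS : ∀ i : ι, Set (Fin (ar i) → S)) (RM : ∀ i : ι, Set (Fin (ar i) → M))
    (IsHom : (S → M) → Prop)
    (hIsHom : ∀ g : S → M, IsHom g ↔ ∀ (i : ι), ∀ t ∈ RS i, (g ∘ t) ∈ RM i)
    (sep2 : ∀ x y : S, x ≠ y → ∃ g : S → M, IsHom g ∧ g x ≠ g y)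
    (sep3 : ∀ (i : ι), ∀ t : Fin (ar i) → S, t ∉ RS i →
      ∃ g : S → M, IsHom g ∧ (g ∘ t) ∉ RM i) :
    Function.Injective (fun (s : S) (φ : {g : S → M // IsHom g}) => φ.1 s) ∧
    ∀ (i : ι) (t : Fin (ar i) → S),
      t ∈ RS i ↔ ∀ φ : {g : S → M // IsHom g}, (fun j => φ.1 (t j)) ∈ RM i :=
  ⟨injective_eval_of_separates sep2, fun i =>
    mem_iff_forall_comp_mem_of_separates (fun g hg => (hIsHom g).mp hg i) (sep3 i)⟩

/-- if a finite structure `S` satisfies (SEP1)–(SEP3) with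
respect to a finite structure `M` of the same signature, then the natural map
`s ↦ (φ s)_{φ ∈ hom(S,M)}` is an embedding of `S` as an induced substructure
of the direct power `M^{hom(S,M)}`. -/
theorem stmt12 {S M : Type} [Fintype S] [Fintype M] {ι : Type} (ar : ι → ℕ)
    (RS : ∀ i : ι, Set (Fin (ar i) → S)) (RM : ∀ i : ι, Set (Fin (ar i) → M))
    (IsHom : (S → M) → Prop)
    (hIsHom : ∀ g : S → M, IsHom g ↔ ∀ (i : ι), ∀ t ∈ RS i, (g ∘ t) ∈ RM i)
    (sep1 : ∃ g : S → M, IsHom g)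
    (sep2 : ∀ x y : S, x ≠ y → ∃ g : S → M, IsHom g ∧ g x ≠ g y)
    (sep3 : ∀ (i : ι), ∀ t : Fin (ar i) → S, t ∉ RS i →
      ∃ g : S → M, IsHom g ∧ (g ∘ t) ∉ RM i) :
    Function.Injective (fun (s : S) (φ : {g : S → M // IsHom g}) => φ.1 s) ∧
    ∀ (i : ι) (t : Fin (ar i) → S),
      t ∈ RS i ↔ ∀ φ : {g : S → M // IsHom g}, (fun j => φ.1 (t j)) ∈ RM i :=
  stmt12_general ar RS RM IsHom hIsHom sep2 sep3
end

section
/- For a finite relational structure M, a structure S of the same signature belongs to the class SP(M) (isomorphic copies of substructures of direct powers of M over nonempty index sets) if and only if S satisfies the separation conditions (SEP1)–(SEP3) with respect to M. -/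
/-!
An embedding `g : S → I → M` into a direct power is the same as the family of its coordinates
`fun s => g s w`, each a homomorphism `S → M`; being injective and inducing the relations of `S`
says precisely that the family separates points and non-tuples, which gives (SEP1)–(SEP3).
Conversely, under (SEP1)–(SEP3) the family of *all* homomorphisms `S → M` is such a family:
evaluation `S → M ^ Hom(S, M)` is an induced embedding, over an index set that (SEP1) makes nonempty.
-/

section RelationalStructures

variable {ι S M I : Type*} {ar : ι → ℕ}
  {RS : ∀ i : ι, Set (Fin (ar i) → S)} {RM : ∀ i : ι, Set (Fin (ar i) → M)}

variable (RS RM) in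
def IsRelHom (g : S → M) : Prop :=
  ∀ (i : ι), ∀ t ∈ RS i, g ∘ t ∈ RM i

variable (RS RM) in
def IsInducedPowerEmbedding (g : S → I → M) : Prop :=
  Function.Injective g ∧ ∀ (i : ι) (t : Fin (ar i) → S),
    t ∈ RS i ↔ ∀ w : I, (fun j => g (t j) w) ∈ RM i

namespace IsInducedPowerEmbedding

variable {g : S → I → M} (hg : IsInducedPowerEmbedding RS RM g)
include hg

theorem isRelHom_eval (w : I) : IsRelHom RS RM (fun s => g s w) :=
  fun i t ht => (hg.2 i t).1 ht w

theorem exists_isRelHom_ne {x y : S} (hxy : x ≠ y) :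
    ∃ h : S → M, IsRelHom RS RM h ∧ h x ≠ h y := by
  obtain ⟨w, hw⟩ := Function.ne_iff.1 (hg.1.ne hxy)
  exact ⟨_, hg.isRelHom_eval w, hw⟩

theorem exists_isRelHom_not_mem {i : ι} {t : Fin (ar i) → S} (ht : t ∉ RS i) :
    ∃ h : S → M, IsRelHom RS RM h ∧ h ∘ t ∉ RM i := by
  obtain ⟨w, hw⟩ := not_forall.1 (mt (hg.2 i t).2 ht)
  exact ⟨_, hg.isRelHom_eval w, hw⟩

end IsInducedPowerEmbedding

variable (RS RM) in
def evalRelHom (s : S) (h : {h : S → M // IsRelHom RS RM h}) : M :=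
  h.1 s

theorem isInducedPowerEmbedding_evalRelHom
    (sep2 : ∀ x y : S, x ≠ y → ∃ h : S → M, IsRelHom RS RM h ∧ h x ≠ h y)
    (sep3 : ∀ (i : ι) (t : Fin (ar i) → S), t ∉ RS i →
      ∃ h : S → M, IsRelHom RS RM h ∧ h ∘ t ∉ RM i) :
    IsInducedPowerEmbedding RS RM (evalRelHom RS RM) := by
  refine ⟨fun x y hxy => ?_, fun i t => ⟨fun ht h => h.2 i t ht, fun hall => ?_⟩⟩
  · by_contra hne
    obtain ⟨h, hh, hne⟩ := sep2 x y hne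
    exact hne (congrFun hxy ⟨h, hh⟩)
  · by_contra ht
    obtain ⟨h, hh, hnot⟩ := sep3 i t ht
    exact hnot (hall ⟨h, hh⟩)

end RelationalStructures

theorem stmt13_general {S M : Type} {ι : Type} (ar : ι → ℕ)
    (RS : ∀ i : ι, Set (Fin (ar i) → S)) (RM : ∀ i : ι, Set (Fin (ar i) → M)) :
    (∃ (I : Type) (_ : Nonempty I) (g : S → I → M), Function.Injective g ∧
      ∀ (i : ι) (t : Fin (ar i) → S),
        t ∈ RS i ↔ ∀ w : I, (fun j => g (t j) w) ∈ RM i) ↔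
    ((∃ g : S → M, ∀ (i : ι), ∀ t ∈ RS i, (g ∘ t) ∈ RM i) ∧
     (∀ x y : S, x ≠ y → ∃ g : S → M,
        (∀ (i : ι), ∀ t ∈ RS i, (g ∘ t) ∈ RM i) ∧ g x ≠ g y) ∧
     (∀ (i : ι), ∀ t : Fin (ar i) → S, t ∉ RS i → ∃ g : S → M,
        (∀ (i' : ι), ∀ t' ∈ RS i', (g ∘ t') ∈ RM i') ∧ (g ∘ t) ∉ RM i)) := by
  constructor
  · rintro ⟨I, ⟨w⟩, g, hg : IsInducedPowerEmbedding RS RM g⟩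
    exact ⟨⟨_, hg.isRelHom_eval w⟩, fun _ _ => hg.exists_isRelHom_ne,
      fun _ _ => hg.exists_isRelHom_not_mem⟩
  · rintro ⟨⟨g₀, hg₀⟩, sep2, sep3⟩
    exact ⟨_, ⟨⟨g₀, hg₀⟩⟩, evalRelHom RS RM, isInducedPowerEmbedding_evalRelHom sep2 sep3⟩

/-- a structure `S` lies in `SP(M)` (isomorphic to an induced
substructure of a direct power of `M` over a nonempty index set), for `M` a
finite structure of the same relational signature, if and only if the
separation conditions (SEP1)–(SEP3) hold. -/
theorem stmt13 {S M : Type} [Fintype M] {ι : Type} (ar : ι → ℕ)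
    (RS : ∀ i : ι, Set (Fin (ar i) → S)) (RM : ∀ i : ι, Set (Fin (ar i) → M)) :
    (∃ (I : Type) (_ : Nonempty I) (g : S → I → M), Function.Injective g ∧
      ∀ (i : ι) (t : Fin (ar i) → S),
        t ∈ RS i ↔ ∀ w : I, (fun j => g (t j) w) ∈ RM i) ↔
    ((∃ g : S → M, ∀ (i : ι), ∀ t ∈ RS i, (g ∘ t) ∈ RM i) ∧
     (∀ x y : S, x ≠ y → ∃ g : S → M,
        (∀ (i : ι), ∀ t ∈ RS i, (g ∘ t) ∈ RM i) ∧ g x ≠ g y) ∧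
     (∀ (i : ι), ∀ t : Fin (ar i) → S, t ∉ RS i → ∃ g : S → M,
        (∀ (i' : ι), ∀ t' ∈ RS i', (g ∘ t') ∈ RM i') ∧ (g ∘ t) ∉ RM i)) :=
  stmt13_general ar RS RM
end

section
/- Let s_0,...,s_{p−1} ∈ {0,1} be a cyclic sequence with no k consecutive equal values (cyclically), let H = ⟨H; r⟩ be a loop-free k-hypergraph structure in which {0,1} is a hyperedge (so all non-constant k-tuples from {0,1} lie in r), and let f: H^p → H be a cyclic p-ary polymorphism. Then the constant k-tuple (a,...,a) with a = f(s_0,...,s_{p−1}) lies in r, contradicting loop-freeness; hence no such f exists for this H. -/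
/-!
Encode the sequence as `v m = if s m then x else y` and feed `f` the `p` windows
`(v m, v (m + 1), …, v (m + k - 1))`. Each window is a non-constant tuple over `{x, y}`, hence a
hyperedge, so the image tuple is in `r`. Its `j`-th entry is `f` applied to `v` shifted by `j`,
which cyclicity turns into `f v`: the image is the loop at `f v`.
-/

theorem apply_shift_natCast_eq {α β : Type*} {p : ℕ} {f : (ZMod p → α) → β}
    (hcyc : ∀ v : ZMod p → α, f v = f fun i => v (i + 1)) (v : ZMod p → α) (n : ℕ) :
    (f fun m => v (m + n)) = f v := by
  induction n with
  | zero => simp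
  | succ n ih =>
    rw [← ih, hcyc fun m => v (m + n)]
    congr 1
    funext m
    push_cast
    ring_nf

theorem const_mem_of_cyclic_polymorphism {α : Type*} {k p : ℕ} {r : Set (Fin k → α)}
    {f : (ZMod p → α) → α}
    (hpoly : ∀ t : ZMod p → Fin k → α, (∀ m, t m ∈ r) → (fun j => f fun m => t m j) ∈ r)
    (hcyc : ∀ v : ZMod p → α, f v = f fun i => v (i + 1))
    {v : ZMod p → α} (hwindow : ∀ m : ZMod p, (fun j : Fin k => v (m + (j : ℕ))) ∈ r) :
    (fun _ : Fin k => f v) ∈ r := by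
  convert hpoly (fun m j => v (m + (j : ℕ))) hwindow using 2 with j
  exact (apply_shift_natCast_eq hcyc v j).symm

theorem window_mem_of_nonconstant_mem {α : Type*} {k p : ℕ} {r : Set (Fin k → α)} {x y : α}
    (hxy : x ≠ y)
    (hedge : ∀ t : Fin k → α, (∀ j, t j = x ∨ t j = y) → (∃ j j', t j ≠ t j') → t ∈ r)
    {s : ZMod p → Bool}
    (hrun : ∀ i : ZMod p, ∃ a b : Fin k, s (i + (a : ℕ)) ≠ s (i + (b : ℕ))) (m : ZMod p) :
    (fun j : Fin k => if s (m + (j : ℕ)) then x else y) ∈ r := by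
  have hcases (b : Bool) : (if b then x else y) = x ∨ (if b then x else y) = y := by
    cases b <;> simp
  have hinj : Function.Injective fun b : Bool => if b then x else y := by
    intro b b' h
    cases b <;> cases b' <;> simp_all [eq_comm]
  obtain ⟨a, b, hab⟩ := hrun m
  exact hedge _ (fun j => hcases _) ⟨a, b, hinj.ne hab⟩

theorem stmt17_general {H : Type} (k p : ℕ)
    (s : ZMod p → Bool)
    (hrun : ∀ i : ZMod p, ∃ a b : Fin k, s (i + (a : ℕ)) ≠ s (i + (b : ℕ)))
    (r : Set (Fin k → H))
    (hloopfree : ∀ a : H, (fun _ : Fin k => a) ∉ r)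
    (x y : H) (hxy : x ≠ y)
    (hedge : ∀ t : Fin k → H, (∀ j, t j = x ∨ t j = y) →
      (∃ j j', t j ≠ t j') → t ∈ r)
    (f : (ZMod p → H) → H)
    (hpoly : ∀ t : ZMod p → Fin k → H,
      (∀ m, t m ∈ r) → (fun j => f fun m => t m j) ∈ r)
    (hcyc : ∀ v : ZMod p → H, f v = f fun i => v (i + 1)) :
    False :=
  hloopfree _ (const_mem_of_cyclic_polymorphism hpoly hcyc
    (v := fun m => if s m then x else y) (window_mem_of_nonconstant_mem hxy hedge hrun))

/-- given a cyclic binary sequence of length `p` with no run of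
`k` consecutive equal values, a loop-free k-hypergraph structure `⟨H; r⟩` in
which `{x, y}` is a hyperedge (all non-constant k-tuples over `{x,y}` lie in
`r`), there is no cyclic p-ary polymorphism of `⟨H; r⟩`: assuming one exists
yields a contradiction with loop-freeness. -/
theorem stmt17 {H : Type} (k p : ℕ) (hk : 2 < k)
    (s : ZMod p → Bool)
    (hrun : ∀ i : ZMod p, ∃ a b : Fin k, s (i + (a : ℕ)) ≠ s (i + (b : ℕ)))
    (r : Set (Fin k → H))
    (hset : ∀ t ∈ r, ∀ t' : Fin k → H, Set.range t' = Set.range t → t' ∈ r)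
    (hloopfree : ∀ a : H, (fun _ : Fin k => a) ∉ r)
    (x y : H) (hxy : x ≠ y)
    (hedge : ∀ t : Fin k → H, (∀ j, t j = x ∨ t j = y) →
      (∃ j j', t j ≠ t j') → t ∈ r)
    (f : (ZMod p → H) → H)
    (hpoly : ∀ t : ZMod p → Fin k → H,
      (∀ m, t m ∈ r) → (fun j => f fun m => t m j) ∈ r)
    (hcyc : ∀ v : ZMod p → H, f v = f fun i => v (i + 1)) :
    False :=
  stmt17_general k p s hrun r hloopfree x y hxy hedge f hpoly hcyc
end
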